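/- For every natural number n and complex number a with (2a-1)_k ≠ 0 for 0 ≤ k ≤ 2n+1 and (a+1/2)_n ≠ 0, ∑_{k=0}^{2n+1} (-2n-1)_k (a)_k 2^k / ((2a-1)_k k!) = -(3/2)_n / ((2a-1) (a+1/2)_n). -/

import Mathlib

/-!
Creative telescoping (Zeilberger). Write `S n` for the sum and `F n k` for its summand. There are
polynomials `α, β, γ` in `n, a` and a certificate `G n k`, a rational multiple of `F (n + 2) k`,
with `α F n k + β F (n + 1) k + γ F (n + 2) k = G n (k + 1) - G n k` up to a constant factor.
Summing over `k` gives the recurrence `α S n + β S (n + 1) + γ S (n + 2) = 0`. The right-hand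
side, whose consecutive ratio is `(2n + 3) / (2a + 2n + 1)`, satisfies the same recurrence, and
both sides agree at `n = 0, 1`.
-/

open Finset

/-- The Pochhammer symbol (rising factorial) `(x)_k = x (x+1) ⋯ (x+k-1)`. -/
noncomputable def poch (x : ℂ) (k : ℕ) : ℂ := (ascPochhammer ℂ k).eval x

lemma poch_succ (x : ℂ) (k : ℕ) : poch x (k + 1) = poch x k * (x + k) :=
  ascPochhammer_succ_eval k x

lemma poch_succ_left (x : ℂ) (k : ℕ) : poch x (k + 1) = x * poch (x + 1) k := by
  simp [poch, ascPochhammer_succ_left, Polynomial.eval_comp]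

lemma poch_add_two (x : ℂ) (k : ℕ) : poch x (k + 2) = poch x k * ((x + k) * (x + k + 1)) := by
  rw [poch_succ, poch_succ, mul_assoc]
  push_cast
  ring

lemma mul_poch_add_two (x : ℂ) (k : ℕ) :
    x * (x + 1) * poch (x + 2) k = poch x k * ((x + k) * (x + k + 1)) := by
  rw [← poch_add_two, poch_succ_left, poch_succ_left, add_assoc, one_add_one_eq_two, mul_assoc]

lemma poch_eq_zero_iff {x : ℂ} {k : ℕ} : poch x k = 0 ↔ ∃ j < k, x + j = 0 := by
  simp only [poch, ascPochhammer_eval_eq_zero_iff, eq_neg_iff_add_eq_zero, add_comm]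

lemma poch_ne_zero_of_le {x : ℂ} {j k : ℕ} (hx : poch x k ≠ 0) (hjk : j ≤ k) :
    poch x j ≠ 0 := by
  simp only [ne_eq, poch_eq_zero_iff, not_exists, not_and] at hx ⊢
  exact fun i hi => hx i (hi.trans_le hjk)

lemma add_ne_zero_of_poch_ne_zero {x : ℂ} {j k : ℕ} (hx : poch x k ≠ 0) (hjk : j < k) :
    x + j ≠ 0 :=
  fun h => hx (poch_eq_zero_iff.2 ⟨j, hjk, h⟩)

noncomputable def hyperTerm (a : ℂ) (n k : ℕ) : ℂ :=
  poch (-(2 * n : ℂ) - 1) k * poch a k * 2 ^ k / (poch (2 * a - 1) k * (k.factorial : ℂ))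

noncomputable def hyperSum (a : ℂ) (n : ℕ) : ℂ :=
  ∑ k ∈ range (2 * n + 2), hyperTerm a n k

lemma hyperTerm_eq_zero {a : ℂ} {n k : ℕ} (hk : 2 * n + 1 < k) : hyperTerm a n k = 0 := by
  have : poch (-(2 * n : ℂ) - 1) k = 0 :=
    poch_eq_zero_iff.2 ⟨2 * n + 1, hk, by push_cast; ring⟩
  simp [hyperTerm, this]

lemma sum_range_hyperTerm {a : ℂ} {n M : ℕ} (hM : 2 * n + 2 ≤ M) :
    ∑ k ∈ range M, hyperTerm a n k = hyperSum a n :=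
  (sum_subset (range_subset_range.2 hM) fun _ _ hk =>
    hyperTerm_eq_zero (by simp at hk; omega)).symm

lemma hyperTerm_mul_eq_hyperTerm_succ (a : ℂ) (n k : ℕ) :
    hyperTerm a n k * ((2 * n + 2) * (2 * n + 3))
      = hyperTerm a (n + 1) k * ((k - 2 * n - 3) * (k - 2 * n - 2)) := by
  have h := mul_poch_add_two (-(2 * (n + 1) : ℂ) - 1) k
  rw [show -(2 * (n + 1) : ℂ) - 1 + 2 = -(2 * n) - 1 by ring] at h
  simp only [hyperTerm, div_mul_eq_mul_div]
  push_cast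
  congr 1
  linear_combination poch a k * 2 ^ k * h

lemma hyperTerm_succ_mul_eq {a : ℂ} {n k : ℕ} (hk : 2 * a - 1 + k ≠ 0 ∨ k = 2 * n + 1) :
    hyperTerm a n (k + 1) * ((2 * a - 1 + k) * (k + 1))
      = hyperTerm a n k * ((k - 2 * n - 1) * (2 * (a + k))) := by
  rcases hk with hk | rfl
  · have : (k + 1 : ℂ) ≠ 0 := by exact_mod_cast k.succ_ne_zero
    simp only [hyperTerm, poch_succ, Nat.factorial_succ, pow_succ]
    push_cast
    field_simp
    ring
  · rw [hyperTerm_eq_zero (by omega)]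
    push_cast
    ring

/-- Found by Zeilberger's algorithm; the factor `k (k + 2a - 2)` cancels the denominator of
`hyperTerm a (n + 2) k / hyperTerm a (n + 2) (k - 1)`, which makes `certificate a n (k + 1)` a
polynomial multiple of `hyperTerm a (n + 2) k`. -/
noncomputable def certificate (a : ℂ) (n k : ℕ) : ℂ :=
  k * (k + 2 * a - 2) * (k ^ 2 - (4 * n + 10) * k + 8 * n + 17 - (4 * n + 8) * a)
    * hyperTerm a (n + 2) k

lemma mul_recurrence_hyperTerm_eq_certificate_sub {a : ℂ} {n k : ℕ}
    (hk : 2 * a - 1 + k ≠ 0 ∨ k = 2 * n + 5) :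
    4 * (n + 2) * (2 * n + 5) * ((n + 1) * (2 * n + 3) * hyperTerm a n k
      - (2 * (n + 1) * (2 * n + 3) + (4 * n + 7) * a) * hyperTerm a (n + 1) k
      + (2 * a + 2 * n + 3) * (a + n + 1) * hyperTerm a (n + 2) k)
      = certificate a n (k + 1) - certificate a n k := by
  have h₀ := hyperTerm_mul_eq_hyperTerm_succ a n k
  have h₁ := hyperTerm_mul_eq_hyperTerm_succ a (n + 1) k
  have h₂ := hyperTerm_succ_mul_eq (n := n + 2)
    (by rwa [show 2 * (n + 2) + 1 = 2 * n + 5 by ring])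
  simp only [certificate]
  push_cast at h₁ h₂ ⊢
  linear_combination 2 * (n + 2) * (2 * n + 5) * h₀
    + ((k - 2 * n - 3) * (k - 2 * n - 2) - 2 * (2 * (n + 1) * (2 * n + 3) + (4 * n + 7) * a)) * h₁
    - ((k + 1) ^ 2 - (4 * n + 10) * (k + 1) + 8 * n + 17 - (4 * n + 8) * a) * h₂

lemma hyperSum_recurrence {a : ℂ} {n : ℕ} (hc : poch (2 * a - 1) (2 * n + 5) ≠ 0) :
    (n + 1) * (2 * n + 3) * hyperSum a n
      - (2 * (n + 1) * (2 * n + 3) + (4 * n + 7) * a) * hyperSum a (n + 1)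
      + (2 * a + 2 * n + 3) * (a + n + 1) * hyperSum a (n + 2) = 0 := by
  have hsum : ∑ k ∈ range (2 * n + 6), (certificate a n (k + 1) - certificate a n k) = 0 := by
    rw [sum_range_sub]
    simp [certificate, hyperTerm_eq_zero (by omega : 2 * (n + 2) + 1 < 2 * n + 6)]
  rw [← sum_congr rfl fun k hk => mul_recurrence_hyperTerm_eq_certificate_sub (k := k) ?_,
    ← mul_sum, sum_add_distrib, sum_sub_distrib, ← mul_sum, ← mul_sum, ← mul_sum,
    sum_range_hyperTerm (by omega), sum_range_hyperTerm (by omega),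
    sum_range_hyperTerm (by omega)] at hsum
  · exact (mul_eq_zero.1 hsum).resolve_left (by norm_cast)
  · rw [mem_range] at hk
    rcases Nat.lt_succ_iff_lt_or_eq.1 hk with hk | hk
    · exact .inl (add_ne_zero_of_poch_ne_zero hc hk)
    · exact .inr hk

lemma hyperSum_zero {a : ℂ} (hc : 2 * a - 1 ≠ 0) : (2 * a - 1) * hyperSum a 0 = -1 := by
  simp [hyperSum, hyperTerm, sum_range_succ, poch]
  field_simp
  ring

lemma hyperSum_one {a : ℂ} (hc : poch (2 * a - 1) 3 ≠ 0) :
    (2 * a - 1) * (a + 1 / 2) * hyperSum a 1 = -(3 / 2) := by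
  have h₀ : 2 * a - 1 ≠ 0 := by
    simpa using add_ne_zero_of_poch_ne_zero hc (j := 0) (by norm_num)
  have h₁ : a ≠ 0 := by simpa using add_ne_zero_of_poch_ne_zero hc (j := 1) (by norm_num)
  have h₂ : 2 * a - 1 + 2 ≠ 0 := by
    exact_mod_cast add_ne_zero_of_poch_ne_zero hc (j := 2) (by norm_num)
  simp [hyperSum, hyperTerm, sum_range_succ, poch, ascPochhammer_succ_eval, Nat.factorial]
  field_simp
  ring

lemma mul_hyperSum_eq {a : ℂ} {n : ℕ} (hc : poch (2 * a - 1) (2 * n + 1) ≠ 0) :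
    (2 * a - 1) * poch (a + 1 / 2) n * hyperSum a n = -poch (3 / 2) n := by
  induction n using Nat.twoStepInduction with
  | zero =>
    simpa [poch] using hyperSum_zero (by simpa using add_ne_zero_of_poch_ne_zero hc one_pos)
  | one =>
    simpa [poch] using hyperSum_one hc
  | more n ih₀ ih₁ =>
    have hγ : (2 * a + 2 * n + 3) * (a + n + 1) ≠ 0 := by
      refine mul_ne_zero ?_ ?_
      · have := add_ne_zero_of_poch_ne_zero hc (j := 2 * n + 4) (by omega)
        push_cast at this
        exact fun h => this (by linear_combination h)
      · have := add_ne_zero_of_poch_ne_zero hc (j := 2 * n + 3) (by omega)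
        push_cast at this
        exact fun h => this (by linear_combination 2 * h)
    have h₀ := ih₀ (poch_ne_zero_of_le hc (by omega))
    have h₁ := ih₁ (poch_ne_zero_of_le hc (by omega))
    have hrec := hyperSum_recurrence (n := n) (by simpa [mul_add, add_assoc] using hc)
    simp only [poch_succ] at h₁
    rw [poch_add_two, poch_add_two]
    apply mul_left_cancel₀ hγ
    linear_combination
      (2 * a - 1) * poch (a + 1 / 2) n * (a + 1 / 2 + n) * (a + 1 / 2 + n + 1) * hrec
      - (n + 1) * (2 * n + 3) * (a + 1 / 2 + n) * (a + 1 / 2 + n + 1) * h₀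
      + (2 * (n + 1) * (2 * n + 3) + (4 * n + 7) * a) * (a + 1 / 2 + n + 1) * h₁

theorem twoF1_neg2np1_a_twoAm1 (n : ℕ) (a : ℂ)
    (h : ∀ k ≤ 2 * n + 1, poch (2 * a - 1) k ≠ 0) (ha : poch (a + 1 / 2) n ≠ 0) :
    ∑ k ∈ range (2 * n + 2),
        poch (-(2 * n : ℂ) - 1) k * poch a k * 2 ^ k / (poch (2 * a - 1) k * (k.factorial : ℂ))
      = -(poch (3 / 2) n / ((2 * a - 1) * poch (a + 1 / 2) n)) := by
  have hpoch := h (2 * n + 1) le_rfl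
  have hc₀ : 2 * a - 1 ≠ 0 := by
    simpa using add_ne_zero_of_poch_ne_zero hpoch (j := 0) (by omega)
  change hyperSum a n = _
  rw [← neg_div, eq_div_iff (mul_ne_zero hc₀ ha)]
  linear_combination mul_hyperSum_eq hpoch
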